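/- Every strongly admissible labelling has at most one min-max numbering: if MM1 and MM2 are both min-max numberings of the same admissible labelling Lab and both use only natural numbers, then MM1 = MM2. -/

import Mathlib

inductive Label where
  | inn | out | und
deriving DecidableEq

/-- A labelling is admissible if every in-labelled argument has all its attackers
labelled out, and every out-labelled argument has at least one in-labelled attacker. -/
def Admissible {Ar : Type*} (att : Ar → Ar → Prop) (L : Ar → Label) : Prop :=
  (∀ x, L x = Label.inn → ∀ y, att y x → L y = Label.out) ∧
  (∀ x, L x = Label.out → ∃ y, att y x ∧ L y = Label.inn)

/-- A min-max numbering (with only natural-number values): in-arguments are numbered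
1 + max of the numbers of their out-labelled attackers (max ∅ = 0), and out-arguments
1 + min of the numbers of their in-labelled attackers. -/
def IsMinMax {Ar : Type*} (att : Ar → Ar → Prop) (L : Ar → Label) (MM : Ar → ℕ) : Prop :=
  (∀ x, L x = Label.inn → MM x = sSup (MM '' {y | att y x ∧ L y = Label.out}) + 1) ∧
  (∀ x, L x = Label.out → MM x = sInf (MM '' {y | att y x ∧ L y = Label.inn}) + 1)

/-- Strongly admissible: admissible and admitting a min-max numbering with only
natural-number (finite) values. -/
def StronglyAdmissible {Ar : Type*} (att : Ar → Ar → Prop) (L : Ar → Label) : Prop :=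
  Admissible att L ∧ ∃ MM : Ar → ℕ, IsMinMax att L MM

/-- Complete labelling: admissible, and every undec argument has an undec attacker
and no in-labelled attacker. -/
def CompleteLab {Ar : Type*} (att : Ar → Ar → Prop) (L : Ar → Label) : Prop :=
  Admissible att L ∧
  ∀ x, L x = Label.und →
    (∃ y, att y x ∧ L y = Label.und) ∧ ∀ y, att y x → L y ≠ Label.inn

/-- The order on labellings: Lab1 ⊑ Lab2 iff in(Lab1) ⊆ in(Lab2) and out(Lab1) ⊆ out(Lab2). -/
def LabLe {Ar : Type*} (L1 L2 : Ar → Label) : Prop :=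
  (∀ x, L1 x = Label.inn → L2 x = Label.inn) ∧
  (∀ x, L1 x = Label.out → L2 x = Label.out)

/-! Compare two numberings `MM ≤ MM'` by strong induction on `MM'`. The out-attackers of an
in-argument, and a minimising in-attacker of an out-argument, have strictly smaller numbers
(finiteness makes the supremum a maximum), so the inequality propagates through the defining
equations; by symmetry the numberings agree. -/

namespace IsMinMax

variable {Ar : Type*} {att : Ar → Ar → Prop} {L : Ar → Label} {MM MM' : Ar → ℕ} {x y : Ar}

theorem lt_of_attacks_of_inn (h : IsMinMax att L MM) (hfin : {y | att y x}.Finite)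
    (hx : L x = Label.inn) (hyx : att y x) (hy : L y = Label.out) : MM y < MM x := by
  have hbdd : BddAbove (MM '' {y | att y x ∧ L y = Label.out}) :=
    ((hfin.subset fun _ hy ↦ hy.1).image MM).bddAbove
  rw [h.1 x hx, Nat.lt_succ_iff]
  exact le_csSup hbdd ⟨y, ⟨hyx, hy⟩, rfl⟩

theorem le_succ_of_attacks_of_out (h : IsMinMax att L MM) (hx : L x = Label.out)
    (hyx : att y x) (hy : L y = Label.inn) : MM x ≤ MM y + 1 := by
  rw [h.2 x hx]
  exact Nat.succ_le_succ (Nat.sInf_le ⟨y, ⟨hyx, hy⟩, rfl⟩)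

theorem exists_attacks_eq_succ_of_out (h : IsMinMax att L MM) (hx : L x = Label.out)
    (hin : ∃ y, att y x ∧ L y = Label.inn) :
    ∃ y, att y x ∧ L y = Label.inn ∧ MM x = MM y + 1 := by
  obtain ⟨y, hyx, hy⟩ := hin
  obtain ⟨z, ⟨hzx, hz⟩, hmin⟩ := Nat.sInf_mem
    (Set.Nonempty.image MM (s := {y | att y x ∧ L y = Label.inn}) ⟨y, hyx, hy⟩)
  exact ⟨z, hzx, hz, by rw [h.2 x hx, hmin]⟩

theorem eq_one_of_out (h : IsMinMax att L MM) (hx : L x = Label.out)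
    (hin : ¬∃ y, att y x ∧ L y = Label.inn) : MM x = 1 := by
  have hempty : {y | att y x ∧ L y = Label.inn} = ∅ :=
    Set.eq_empty_of_forall_notMem fun y hy ↦ hin ⟨y, hy⟩
  rw [h.2 x hx, hempty, Set.image_empty, Nat.sInf_empty]

theorem le_of_isMinMax (h : IsMinMax att L MM) (h' : IsMinMax att L MM')
    (hfin : ∀ x, {y | att y x}.Finite) (hx : L x ≠ Label.und) : MM x ≤ MM' x := by
  induction hn : MM' x using Nat.strong_induction_on generalizing x with
  | _ n ih =>
  subst hn
  have ih' : ∀ y, L y ≠ Label.und → MM' y < MM' x → MM y ≤ MM' y :=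
    fun y hy hlt ↦ ih _ hlt hy rfl
  cases hL : L x with
  | und => exact absurd hL hx
  | inn =>
    have hbdd : BddAbove (MM' '' {y | att y x ∧ L y = Label.out}) :=
      (((hfin x).subset fun _ hy ↦ hy.1).image MM').bddAbove
    rw [h.1 x hL, h'.1 x hL, sSup_image', sSup_image']
    refine Nat.succ_le_succ (ciSup_mono (by rwa [← Set.image_eq_range]) fun ⟨y, hyx, hy⟩ ↦ ?_)
    exact ih' y (by simp [hy]) (h'.lt_of_attacks_of_inn (hfin x) hL hyx hy)
  | out =>
    by_cases hin : ∃ y, att y x ∧ L y = Label.inn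
    · obtain ⟨y, hyx, hy, hxy⟩ := h'.exists_attacks_eq_succ_of_out hL hin
      calc MM x ≤ MM y + 1 := h.le_succ_of_attacks_of_out hL hyx hy
        _ ≤ MM' y + 1 := Nat.succ_le_succ (ih' y (by simp [hy]) (by omega))
        _ = MM' x := hxy.symm
    · rw [h.eq_one_of_out hL hin, h'.eq_one_of_out hL hin]

end IsMinMax

theorem minMax_unique_general
    {Ar : Type*} [Fintype Ar] (att : Ar → Ar → Prop) (Lab : Ar → Label) (MM1 MM2 : Ar → ℕ)
    (h1 : IsMinMax att Lab MM1) (h2 : IsMinMax att Lab MM2) :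
    ∀ x, Lab x ≠ Label.und → MM1 x = MM2 x := by
  have hfin : ∀ x, {y | att y x}.Finite := fun _ ↦ Set.toFinite _
  exact fun x hx ↦ le_antisymm (h1.le_of_isMinMax h2 hfin hx) (h2.le_of_isMinMax h1 hfin hx)

/-- Every strongly admissible labelling has at most one min-max numbering:
two min-max numberings of the same admissible labelling agree on all in/out arguments. -/
theorem minMax_unique
    {Ar : Type*} [Fintype Ar] (att : Ar → Ar → Prop) (Lab : Ar → Label) (MM1 MM2 : Ar → ℕ)
    (hadm : Admissible att Lab)
    (h1 : IsMinMax att Lab MM1) (h2 : IsMinMax att Lab MM2) :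
    ∀ x, Lab x ≠ Label.und → MM1 x = MM2 x :=
  minMax_unique_general att Lab MM1 MM2 h1 h2
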